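/- State predicates can be replaced by self-loop actions: for the transform S(T) of a nominal transition system T which removes all predicates and adds, for each P ⊢ φ, a transition P —φ→ P with bn(φ)=∅, strong bisimilarity in T coincides with strong bisimilarity in S(T), and weak bisimilarity in T coincides with weak bisimilarity in S(T). -/

import Mathlib

open scoped Classical

universe u v

abbrev Atom : Type := ℕ

/-- A permutation of atoms is finitary if it moves only finitely many atoms. -/
def IsFinPerm (π : Equiv.Perm Atom) : Prop := {a : Atom | π a ≠ a}.Finite

/-- `N` supports `x` with respect to the permutation action `act`. -/
def SupportsAct {X : Type*} (act : Equiv.Perm Atom → X → X) (N : Set Atom) (x : X) : Prop :=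
  ∀ π : Equiv.Perm Atom, IsFinPerm π → (∀ a ∈ N, π a = a) → act π x = x

/-- The support of `x`: the intersection of all finite supporting sets. -/
def suppAct {X : Type*} (act : Equiv.Perm Atom → X → X) (x : X) : Set Atom :=
  ⋂₀ {N : Set Atom | N.Finite ∧ SupportsAct act N x}

/-- `x` is finitely supported. -/
def FinSuppAct {X : Type*} (act : Equiv.Perm Atom → X → X) (x : X) : Prop :=
  ∃ N : Set Atom, N.Finite ∧ SupportsAct act N x

/-- The pointwise action on subsets. -/
def setAct {X : Type*} (act : Equiv.Perm Atom → X → X) (π : Equiv.Perm Atom) (s : Set X) :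
    Set X :=
  act π '' s

/-- A nominal set: a permutation action where every element is finitely supported. -/
structure Nominal (X : Type*) where
  act : Equiv.Perm Atom → X → X
  act_one : ∀ x, act 1 x = x
  act_mul : ∀ π π' x, act (π * π') x = act π (act π' x)
  finSupp : ∀ x, FinSuppAct act x

/-- A nominal transition system. -/
structure NTS (States Pred Act : Type*) where
  nomS : Nominal States
  nomP : Nominal Pred
  nomA : Nominal Act
  sat : States → Pred → Prop
  sat_eqv : ∀ π, IsFinPerm π → ∀ P φ, sat P φ → sat (nomS.act π P) (nomP.act π φ)
  bn : Act → Finset Atom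
  bn_eqv : ∀ π, IsFinPerm π → ∀ α, (bn (nomA.act π α) : Set Atom) = π '' (bn α : Set Atom)
  bn_supp : ∀ α, (bn α : Set Atom) ⊆ suppAct nomA.act α
  tr : States → Act → States → Prop
  tr_eqv : ∀ π, IsFinPerm π → ∀ P α P', tr P α P' →
    tr (nomS.act π P) (nomA.act π α) (nomS.act π P')
  tr_alpha : ∀ (a b : Atom) (P : States) (α : Act) (P' : States), a ∈ bn α →
    b ∉ suppAct nomA.act α → b ∉ suppAct nomS.act P' → tr P α P' →
    tr P (nomA.act (Equiv.swap a b) α) (nomS.act (Equiv.swap a b) P')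

variable {S Pr Ac : Type*}

/-- A (strong) bisimulation: symmetric, statically implicating, and simulating. -/
def NTS.IsBisim (T : NTS S Pr Ac) (R : S → S → Prop) : Prop :=
  (∀ P Q, R P Q → R Q P) ∧
  ∀ P Q, R P Q →
    (∀ φ, T.sat P φ → T.sat Q φ) ∧
    (∀ α P', (∀ a ∈ T.bn α, a ∉ suppAct T.nomS.act Q) → T.tr P α P' →
      ∃ Q', T.tr Q α Q' ∧ R P' Q')

/-- Bisimilarity. -/
def NTS.Bisim (T : NTS S Pr Ac) (P Q : S) : Prop := ∃ R, T.IsBisim R ∧ R P Q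

/-- `P ⟹ P'`: a finite (possibly empty) sequence of `τ`-transitions. -/
inductive TauStar (T : NTS S Pr Ac) (τ : Ac) : S → S → Prop
  | refl (P : S) : TauStar T τ P P
  | step {P P'' P' : S} : T.tr P τ P'' → TauStar T τ P'' P' → TauStar T τ P P'

/-- The weak transition `P ⟹α⟹ P'`: just `⟹` if `α = τ`, otherwise
`⟹ ∘ ⟶α⟶ ∘ ⟹`. -/
def NTS.weakTr (T : NTS S Pr Ac) (τ : Ac) (P : S) (α : Ac) (P' : S) : Prop :=
  if α = τ then TauStar T τ P P'
  else ∃ P₁ P₂, TauStar T τ P P₁ ∧ T.tr P₁ α P₂ ∧ TauStar T τ P₂ P'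

/-- A weak bisimulation: symmetric, satisfying weak static implication and weak
simulation. -/
def NTS.IsWeakBisim (T : NTS S Pr Ac) (τ : Ac) (R : S → S → Prop) : Prop :=
  (∀ P Q, R P Q → R Q P) ∧
  ∀ P Q, R P Q →
    (∀ φ, T.sat P φ → ∃ Q', TauStar T τ Q Q' ∧ T.sat Q' φ ∧ R P Q') ∧
    (∀ α P', (∀ a ∈ T.bn α, a ∉ suppAct T.nomS.act Q) → T.tr P α P' →
      ∃ Q', T.weakTr τ Q α Q' ∧ R P' Q')

/-- Weak bisimilarity. -/
def NTS.WBisim (T : NTS S Pr Ac) (τ : Ac) (P Q : S) : Prop :=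
  ∃ R, T.IsWeakBisim τ R ∧ R P Q

variable {S Pr Ac : Type}

/-- Transitions of the transform `S(T)`: the original transitions, plus a self-loop
`P ⟶φ⟶ P` for each predicate `φ` satisfied by `P`. -/
def stTr (T : NTS S Pr Ac) : S → Ac ⊕ Pr → S → Prop
  | P, .inl α, P' => T.tr P α P'
  | P, .inr φ, P' => P' = P ∧ T.sat P φ

/-- Binding names in `S(T)`: those of `T` for actions, empty for predicate-actions. -/
def stBn (T : NTS S Pr Ac) : Ac ⊕ Pr → Finset Atom
  | .inl α => T.bn α
  | .inr _ => ∅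

/-- A strong bisimulation on `S(T)` (which has no state predicates, so static implication
is vacuous). -/
def stIsBisim (T : NTS S Pr Ac) (R : S → S → Prop) : Prop :=
  (∀ P Q, R P Q → R Q P) ∧
  ∀ P Q, R P Q → ∀ a P', (∀ x ∈ stBn T a, x ∉ suppAct T.nomS.act Q) → stTr T P a P' →
    ∃ Q', stTr T Q a Q' ∧ R P' Q'

/-- Strong bisimilarity on `S(T)`. -/
def stBisim (T : NTS S Pr Ac) (P Q : S) : Prop := ∃ R, stIsBisim T R ∧ R P Q

/-- Weak transitions of `S(T)` with unobservable action `inl τ`. -/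
def stWeakTr (T : NTS S Pr Ac) (τ : Ac) (P : S) (a : Ac ⊕ Pr) (P' : S) : Prop :=
  if a = Sum.inl τ then TauStar T τ P P'
  else ∃ P₁ P₂, TauStar T τ P P₁ ∧ stTr T P₁ a P₂ ∧ TauStar T τ P₂ P'

/-- A weak bisimulation on `S(T)` (no state predicates, so weak static implication is
vacuous). -/
def stIsWeakBisim (T : NTS S Pr Ac) (τ : Ac) (R : S → S → Prop) : Prop :=
  (∀ P Q, R P Q → R Q P) ∧
  ∀ P Q, R P Q → ∀ a P', (∀ x ∈ stBn T a, x ∉ suppAct T.nomS.act Q) → stTr T P a P' →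
    ∃ Q', stWeakTr T τ Q a Q' ∧ R P' Q'

/-- Weak bisimilarity on `S(T)`. -/
def stWBisim (T : NTS S Pr Ac) (τ : Ac) (P Q : S) : Prop :=
  ∃ R, stIsWeakBisim T τ R ∧ R P Q

section PermLemmas

theorem isFinPerm_one : IsFinPerm 1 := by
  simp [IsFinPerm]

theorem isFinPerm_swap (a b : Atom) : IsFinPerm (Equiv.swap a b) := by
  apply Set.Finite.subset ((Set.finite_singleton a).insert b)
  intro x hx
  by_contra hc
  simp only [Set.mem_insert_iff, Set.mem_singleton_iff, not_or] at hc
  exact hx (Equiv.swap_apply_of_ne_of_ne hc.2 hc.1)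

theorem isFinPerm_mul {π σ : Equiv.Perm Atom} (hπ : IsFinPerm π) (hσ : IsFinPerm σ) :
    IsFinPerm (π * σ) := by
  apply Set.Finite.subset (hπ.union hσ)
  intro x hx
  by_contra hc
  simp at hc
  simp [Equiv.Perm.mul_apply, hc.2, hc.1] at hx

theorem isFinPerm_inv {π : Equiv.Perm Atom} (hπ : IsFinPerm π) : IsFinPerm π⁻¹ := by
  have : {a : Atom | π⁻¹ a ≠ a} = {a : Atom | π a ≠ a} := by
    ext a
    simp only [Set.mem_setOf_eq, ne_eq, Equiv.Perm.inv_eq_iff_eq]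
    rw [eq_comm]
  rw [IsFinPerm, this]; exact hπ

end PermLemmas

section SuppLemmas

variable {X : Type*} {act : Equiv.Perm Atom → X → X}

theorem supp_subset_of_supports {N : Set Atom} {x : X} (hfin : N.Finite)
    (h : SupportsAct act N x) : suppAct act x ⊆ N :=
  Set.sInter_subset_of_mem ⟨hfin, h⟩

theorem supp_finite {x : X} (h : FinSuppAct act x) : (suppAct act x).Finite := by
  obtain ⟨N, hN, hsup⟩ := h
  exact hN.subset (supp_subset_of_supports hN hsup)

theorem notin_supp {x : X} {a : Atom} (h : a ∉ suppAct act x) :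
    ∃ N : Set Atom, N.Finite ∧ SupportsAct act N x ∧ a ∉ N := by
  simp only [suppAct, Set.mem_sInter, Set.mem_setOf_eq, not_forall] at h
  obtain ⟨N, ⟨h1, h2⟩, h3⟩ := h
  exact ⟨N, h1, h2, h3⟩
section NominalLemmas

variable {X : Type*} (M : Nominal X)

theorem Nominal.act_inv_act (π : Equiv.Perm Atom) (x : X) :
    M.act π⁻¹ (M.act π x) = x := by
  rw [← M.act_mul, inv_mul_cancel, M.act_one]

theorem Nominal.act_act_inv (π : Equiv.Perm Atom) (x : X) :
    M.act π (M.act π⁻¹ x) = x := by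
  rw [← M.act_mul, mul_inv_cancel, M.act_one]

theorem Nominal.act_injective (π : Equiv.Perm Atom) : Function.Injective (M.act π) := by
  intro x y h
  have := congrArg (M.act π⁻¹) h
  rwa [M.act_inv_act, M.act_inv_act] at this

/-- If `a` and `b` are both outside the support of `x`, the swap `(a b)` fixes `x`. -/
theorem Nominal.swap_fix {x : X} {a b : Atom} (ha : a ∉ suppAct M.act x)
    (hb : b ∉ suppAct M.act x) : M.act (Equiv.swap a b) x = x := by
  by_cases hab : a = b
  · subst hab; rw [Equiv.swap_self]
    exact M.act_one x
  obtain ⟨Na, hNaf, hNas, hNa⟩ := notin_supp ha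
  obtain ⟨Nb, hNbf, hNbs, hNb⟩ := notin_supp hb
  obtain ⟨c, hc⟩ := Set.Infinite.nonempty
    (Set.Finite.infinite_compl ((hNaf.union hNbf).union (Set.finite_singleton a |>.insert b)))
  simp only [Set.mem_compl_iff, Set.mem_union, Set.mem_insert_iff, Set.mem_singleton_iff,
    not_or] at hc
  obtain ⟨⟨hcNa, hcNb⟩, hcb, hca⟩ := hc
  have key : Equiv.swap a b = Equiv.swap b c * Equiv.swap a c * (Equiv.swap b c)⁻¹ := by
    have := Equiv.swap_apply_apply (Equiv.swap b c) a c
    rw [Equiv.swap_apply_of_ne_of_ne hab (fun h => hca h.symm),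
      Equiv.swap_apply_right] at this
    exact this
  rw [key, Equiv.swap_inv, M.act_mul, M.act_mul]
  have h1 : M.act (Equiv.swap b c) x = x :=
    hNbs _ (isFinPerm_swap b c) (fun y hy => Equiv.swap_apply_of_ne_of_ne
      (fun h => hNb (h ▸ hy)) (fun h => hcNb (h ▸ hy)))
  have h2 : M.act (Equiv.swap a c) x = x :=
    hNas _ (isFinPerm_swap a c) (fun y hy => Equiv.swap_apply_of_ne_of_ne
      (fun h => hNa (h ▸ hy)) (fun h => hcNa (h ▸ hy)))
  rw [h1, h2, h1]

/-- The support of `x` supports `x`. -/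
theorem Nominal.supp_supports (x : X) : SupportsAct M.act (suppAct M.act x) x := by
  have key : ∀ (n : ℕ) (π : Equiv.Perm Atom) (hπ : IsFinPerm π), hπ.toFinset.card ≤ n →
      (∀ a ∈ suppAct M.act x, π a = a) → M.act π x = x := by
    intro n
    induction n with
    | zero =>
      intro π hπ hcard _
      have hall : ∀ a, π a = a := by
        intro a
        by_contra hc
        have : a ∈ hπ.toFinset := (Set.Finite.mem_toFinset hπ).mpr hc
        have := Finset.card_pos.mpr ⟨a, this⟩
        omega
      have : π = 1 := Equiv.ext hall
      rw [this, M.act_one]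
    | succ n ih =>
      intro π hπ hcard hfix
      by_cases hid : ∀ a, π a = a
      · have : π = 1 := Equiv.ext hid
        rw [this, M.act_one]
      push_neg at hid
      obtain ⟨a, hamoved⟩ := hid
      have hπa_moved : π (π a) ≠ π a := fun h => hamoved (π.injective h)
      have hanotsupp : a ∉ suppAct M.act x := fun h => hamoved (hfix a h)
      have hπanotsupp : π a ∉ suppAct M.act x := fun h => hπa_moved (hfix _ h)
      set σ : Equiv.Perm Atom := Equiv.swap a (π a) * π with hσ
      have hσfin : IsFinPerm σ := isFinPerm_mul (isFinPerm_swap _ _) hπ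
      have hσsub : ∀ y, σ y ≠ y → π y ≠ y ∧ y ≠ a := by
        intro y hy
        constructor
        · intro hyc
          apply hy
          have hya : y ≠ a := fun h => hamoved (h ▸ hyc)
          have hyπa : y ≠ π a := fun h => hπa_moved (by rw [← h, hyc])
          show (Equiv.swap a (π a)) (π y) = y
          rw [hyc]
          exact Equiv.swap_apply_of_ne_of_ne hya hyπa
        · intro hyc
          subst hyc
          apply hy
          show (Equiv.swap y (π y)) (π y) = y
          exact Equiv.swap_apply_right y (π y)
      have hσfix : ∀ y ∈ suppAct M.act x, σ y = y := by
        intro y hy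
        have h1 : π y = y := hfix y hy
        show (Equiv.swap a (π a)) (π y) = y
        rw [h1]
        exact Equiv.swap_apply_of_ne_of_ne (fun h => hanotsupp (h ▸ hy))
          (fun h => hπanotsupp (h ▸ hy))
      have hsub : hσfin.toFinset ⊆ hπ.toFinset.erase a := by
        intro y hy
        replace hy : σ y ≠ y := (Set.Finite.mem_toFinset hσfin).mp hy
        obtain ⟨h1, h2⟩ := hσsub y hy
        exact Finset.mem_erase.mpr ⟨h2, (Set.Finite.mem_toFinset hπ).mpr h1⟩
      have hcard' : hσfin.toFinset.card ≤ n := by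
        have h1 := Finset.card_le_card hsub
        have h2 : a ∈ hπ.toFinset := (Set.Finite.mem_toFinset hπ).mpr hamoved
        have h3 := Finset.card_erase_of_mem h2
        omega
      have hIH : M.act σ x = x := ih σ hσfin hcard' hσfix
      have hdec : π = Equiv.swap a (π a) * σ := by
        rw [hσ, ← mul_assoc, Equiv.swap_mul_self, one_mul]
      rw [hdec, M.act_mul, hIH]
      exact M.swap_fix hanotsupp hπanotsupp
  intro π hπ hfix
  exact key hπ.toFinset.card π hπ le_rfl hfix

theorem Nominal.supports_act {N : Set Atom} {x : X} (h : SupportsAct M.act N x)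
    {π : Equiv.Perm Atom} (hπ : IsFinPerm π) :
    SupportsAct M.act (π '' N) (M.act π x) := by
  intro σ hσ hfixσ
  have hfin' : IsFinPerm (π⁻¹ * σ * π) :=
    isFinPerm_mul (isFinPerm_mul (isFinPerm_inv hπ) hσ) hπ
  have hfix' : ∀ a ∈ N, (π⁻¹ * σ * π) a = a := by
    intro a ha
    simp only [Equiv.Perm.mul_apply]
    rw [hfixσ (π a) ⟨a, ha, rfl⟩, Equiv.Perm.inv_def, Equiv.symm_apply_apply]
  have := h _ hfin' hfix'
  calc M.act σ (M.act π x) = M.act (σ * π) x := (M.act_mul _ _ _).symm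
    _ = M.act (π * (π⁻¹ * σ * π)) x := by congr 1; group
    _ = M.act π (M.act (π⁻¹ * σ * π) x) := M.act_mul _ _ _
    _ = M.act π x := by rw [this]

/-- Equivariance of support. -/
theorem Nominal.supp_eqv (x : X) {π : Equiv.Perm Atom} (hπ : IsFinPerm π) :
    suppAct M.act (M.act π x) = π '' suppAct M.act x := by
  apply Set.Subset.antisymm
  · intro a ha
    rw [Set.mem_image]
    refine ⟨π⁻¹ a, ?_, (π.apply_symm_apply a : π (π⁻¹ a) = a)⟩
    by_contra hc
    obtain ⟨N, hNf, hNs, hNa⟩ := notin_supp hc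
    have : a ∉ π '' N := by
      rintro ⟨b, hb, rfl⟩
      exact hNa (by rwa [Equiv.Perm.inv_def, Equiv.symm_apply_apply])
    exact this (supp_subset_of_supports (hNf.image π) (M.supports_act hNs hπ) ha)
  · rintro _ ⟨b, hb, rfl⟩
    intro M' hM'
    obtain ⟨hM'f, hM's⟩ := hM'
    have hsup : SupportsAct M.act (⇑(π⁻¹) '' M') x := by
      have := M.supports_act hM's (isFinPerm_inv hπ)
      rwa [M.act_inv_act] at this
    have hb' : b ∈ ⇑(π⁻¹) '' M' :=
      supp_subset_of_supports (hM'f.image _) hsup hb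
    obtain ⟨c, hc, hcb⟩ := hb'
    have : π b = c := by rw [← hcb, Equiv.Perm.inv_def, Equiv.apply_symm_apply]
    rwa [this]

end NominalLemmas
section NTSLemmas

variable {S Pr Ac : Type}

theorem TauStar.trans {T : NTS S Pr Ac} {τ : Ac} {P Q R' : S} (h1 : TauStar T τ P Q)
    (h2 : TauStar T τ Q R') : TauStar T τ P R' := by
  induction h1 with
  | refl _ => exact h2
  | step h _ ih => exact TauStar.step h (ih h2)

variable (T : NTS S Pr Ac)

theorem NTS.act_tau {τ : Ac} (hτ : suppAct T.nomA.act τ = ∅) {π : Equiv.Perm Atom}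
    (hπ : IsFinPerm π) : T.nomA.act π τ = τ :=
  T.nomA.supp_supports τ π hπ (by simp [hτ])

theorem tauStar_eqv {τ : Ac} (hτ : suppAct T.nomA.act τ = ∅) {π : Equiv.Perm Atom}
    (hπ : IsFinPerm π) {P P' : S} (h : TauStar T τ P P') :
    TauStar T τ (T.nomS.act π P) (T.nomS.act π P') := by
  induction h with
  | refl _ => exact .refl _
  | step h _ ih =>
    refine TauStar.step ?_ ih
    have := T.tr_eqv π hπ _ _ _ h
    rwa [T.act_tau hτ hπ] at this

/-- The action on the actions of `S(T)`. -/
def NTS.actSum (π : Equiv.Perm Atom) : Ac ⊕ Pr → Ac ⊕ Pr :=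
  Sum.map (T.nomA.act π) (T.nomP.act π)

theorem NTS.actSum_mul (π π' : Equiv.Perm Atom) (a : Ac ⊕ Pr) :
    T.actSum (π * π') a = T.actSum π (T.actSum π' a) := by
  cases a <;> simp [NTS.actSum, T.nomA.act_mul, T.nomP.act_mul]

theorem NTS.actSum_one (a : Ac ⊕ Pr) : T.actSum 1 a = a := by
  cases a <;> simp [NTS.actSum, T.nomA.act_one, T.nomP.act_one]

theorem stTr_eqv {π : Equiv.Perm Atom} (hπ : IsFinPerm π) {P : S} {a : Ac ⊕ Pr} {P' : S}
    (h : stTr T P a P') : stTr T (T.nomS.act π P) (T.actSum π a) (T.nomS.act π P') := by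
  cases a with
  | inl α => exact T.tr_eqv π hπ _ _ _ h
  | inr φ =>
    obtain ⟨rfl, hsat⟩ := h
    exact ⟨rfl, T.sat_eqv π hπ _ _ hsat⟩

theorem stBn_actSum {π : Equiv.Perm Atom} (hπ : IsFinPerm π) (a : Ac ⊕ Pr) :
    (stBn T (T.actSum π a) : Set Atom) = π '' (stBn T a : Set Atom) := by
  cases a with
  | inl α => exact T.bn_eqv π hπ α
  | inr φ => simp [stBn, NTS.actSum]

theorem NTS.actSum_eq_inl_tau {τ : Ac} (hτ : suppAct T.nomA.act τ = ∅)
    {π : Equiv.Perm Atom} (hπ : IsFinPerm π) (a : Ac ⊕ Pr) :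
    T.actSum π a = Sum.inl τ ↔ a = Sum.inl τ := by
  cases a with
  | inl α =>
    simp only [NTS.actSum, Sum.map_inl, Sum.inl.injEq]
    constructor
    · intro h
      have := congrArg (T.nomA.act π⁻¹) h
      rwa [T.nomA.act_inv_act, T.act_tau hτ (isFinPerm_inv hπ)] at this
    · rintro rfl
      exact T.act_tau hτ hπ
  | inr φ => simp [NTS.actSum]

theorem stWeakTr_eqv {τ : Ac} (hτ : suppAct T.nomA.act τ = ∅) {π : Equiv.Perm Atom}
    (hπ : IsFinPerm π) {P : S} {a : Ac ⊕ Pr} {P' : S} (h : stWeakTr T τ P a P') :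
    stWeakTr T τ (T.nomS.act π P) (T.actSum π a) (T.nomS.act π P') := by
  by_cases ha : a = Sum.inl τ
  · subst ha
    rw [stWeakTr, if_pos rfl] at h
    rw [stWeakTr, if_pos ((T.actSum_eq_inl_tau hτ hπ _).mpr rfl)]
    exact tauStar_eqv T hτ hπ h
  · rw [stWeakTr, if_neg ha] at h
    rw [stWeakTr, if_neg (fun hc => ha ((T.actSum_eq_inl_tau hτ hπ _).mp hc))]
    obtain ⟨P₁, P₂, h1, h2, h3⟩ := h
    exact ⟨_, _, tauStar_eqv T hτ hπ h1, stTr_eqv T hπ h2, tauStar_eqv T hτ hπ h3⟩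

theorem weakTr_iff_stWeakTr (τ : Ac) (P : S) (α : Ac) (P' : S) :
    T.weakTr τ P α P' ↔ stWeakTr T τ P (Sum.inl α) P' := by
  by_cases h : α = τ
  · subst h
    rw [NTS.weakTr, if_pos rfl, stWeakTr, if_pos rfl]
  · rw [NTS.weakTr, if_neg h, stWeakTr, if_neg (by simpa using h)]
    rfl

theorem stWeakTr_prepend {τ : Ac} {Q Q₂ X : S} {a : Ac ⊕ Pr} (h1 : TauStar T τ Q Q₂)
    (h2 : stWeakTr T τ Q₂ a X) : stWeakTr T τ Q a X := by
  by_cases ha : a = Sum.inl τ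
  · subst ha
    rw [stWeakTr, if_pos rfl] at h2 ⊢
    exact h1.trans h2
  · rw [stWeakTr, if_neg ha] at h2 ⊢
    obtain ⟨P₁, P₂, hh1, hh2, hh3⟩ := h2
    exact ⟨P₁, P₂, h1.trans hh1, hh2, hh3⟩

/-- Interpolation: a weak bisimulation on `S(T)` matches `τ`-sequences. -/
theorem interpolation {τ : Ac} (hτ : suppAct T.nomA.act τ = ∅) {R : S → S → Prop}
    (hR : stIsWeakBisim T τ R) {P P' : S} (h : TauStar T τ P P') :
    ∀ Q, R P Q → ∃ Q', TauStar T τ Q Q' ∧ R P' Q' := by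
  induction h with
  | refl P => exact fun Q hQ => ⟨Q, .refl Q, hQ⟩
  | step h _ ih =>
    intro Q hQ
    have hfresh : ∀ x ∈ stBn T (Sum.inl τ), x ∉ suppAct T.nomS.act Q := by
      intro x hx
      exact absurd (hτ ▸ T.bn_supp τ (by exact_mod_cast hx)) (Set.notMem_empty x)
    obtain ⟨Q₁, hw, hR1⟩ := hR.2 _ _ hQ (Sum.inl τ) _ hfresh h
    rw [stWeakTr, if_pos rfl] at hw
    obtain ⟨Q', h1, h2⟩ := ih Q₁ hR1
    exact ⟨Q', hw.trans h1, h2⟩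

end NTSLemmas
section Rename

variable {S Pr Ac : Type} (T : NTS S Pr Ac)

/-- Iterated alpha-conversion of a transition along a list of disjoint swaps. -/
theorem rename_list :
    ∀ (L : List (Atom × Atom)) (α : Ac) (P P' : S),
    T.tr P α P' →
    (∀ p ∈ L, p.1 ∈ T.bn α) →
    (∀ p ∈ L, p.2 ∉ suppAct T.nomA.act α) →
    (∀ p ∈ L, p.2 ∉ suppAct T.nomS.act P') →
    (L.map Prod.fst).Nodup →
    (L.map Prod.snd).Nodup →
    (∀ p ∈ L, ∀ q ∈ L, p.1 ≠ q.2) →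
    ∃ π : Equiv.Perm Atom, IsFinPerm π ∧
      (∀ p ∈ L, π p.1 = p.2) ∧ (∀ p ∈ L, π p.2 = p.1) ∧
      (∀ x, (∀ p ∈ L, x ≠ p.1 ∧ x ≠ p.2) → π x = x) ∧
      T.tr P (T.nomA.act π α) (T.nomS.act π P') := by
  intro L
  induction L with
  | nil =>
    intro α P P' htr _ _ _ _ _ _
    refine ⟨1, isFinPerm_one, by simp, by simp, fun x _ => rfl, ?_⟩
    rw [T.nomA.act_one, T.nomS.act_one]
    exact htr
  | cons hd tl ih =>
    intro α P P' htr h1 h2 h3 h4 h5 h6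
    obtain ⟨a, b⟩ := hd
    have hmemhd : (a, b) ∈ (a, b) :: tl := List.mem_cons_self
    have ha_bn : a ∈ T.bn α := h1 _ hmemhd
    have hb_sA : b ∉ suppAct T.nomA.act α := h2 _ hmemhd
    have hb_sS : b ∉ suppAct T.nomS.act P' := h3 _ hmemhd
    have ha_sA : (a : Atom) ∈ suppAct T.nomA.act α := T.bn_supp α (by exact_mod_cast ha_bn)
    have hab : a ≠ b := fun h => hb_sA (h ▸ ha_sA)
    set s : Equiv.Perm Atom := Equiv.swap a b with hs
    have hsf : IsFinPerm s := isFinPerm_swap a b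
    have htr1 : T.tr P (T.nomA.act s α) (T.nomS.act s P') :=
      T.tr_alpha a b P α P' ha_bn hb_sA hb_sS htr
    -- basic distinctness facts for tail elements
    have htl1a : ∀ p ∈ tl, p.1 ≠ a := by
      intro p hp hc
      exact (List.nodup_cons.mp h4).1 (List.mem_map.mpr ⟨p, hp, hc⟩)
    have htl1b : ∀ p ∈ tl, p.1 ≠ b := by
      intro p hp
      exact h6 _ (List.mem_cons_of_mem _ hp) _ hmemhd
    have htl2b : ∀ p ∈ tl, p.2 ≠ b := by
      intro p hp hc
      exact (List.nodup_cons.mp h5).1 (List.mem_map.mpr ⟨p, hp, hc⟩)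
    have htl2a : ∀ p ∈ tl, p.2 ≠ a := by
      intro p hp hc
      exact h6 _ hmemhd _ (List.mem_cons_of_mem _ hp) hc.symm
    have hfix1 : ∀ p ∈ tl, s p.1 = p.1 := fun p hp =>
      Equiv.swap_apply_of_ne_of_ne (htl1a p hp) (htl1b p hp)
    have hfix2 : ∀ p ∈ tl, s p.2 = p.2 := fun p hp =>
      Equiv.swap_apply_of_ne_of_ne (htl2a p hp) (htl2b p hp)
    -- hypotheses for the tail
    have h1' : ∀ p ∈ tl, p.1 ∈ T.bn (T.nomA.act s α) := by
      intro p hp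
      rw [← Finset.mem_coe]
      rw [T.bn_eqv s hsf α]
      exact ⟨p.1, by exact_mod_cast h1 _ (List.mem_cons_of_mem _ hp), hfix1 p hp⟩
    have h2' : ∀ p ∈ tl, p.2 ∉ suppAct T.nomA.act (T.nomA.act s α) := by
      intro p hp hc
      rw [T.nomA.supp_eqv α hsf] at hc
      obtain ⟨y, hy, hey⟩ := hc
      have hyp : y = p.2 := by
        have h' := congrArg s hey
        rw [hfix2 p hp] at h'
        rwa [Equiv.swap_apply_self] at h'
      exact h2 _ (List.mem_cons_of_mem _ hp) (hyp ▸ hy)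
    have h3' : ∀ p ∈ tl, p.2 ∉ suppAct T.nomS.act (T.nomS.act s P') := by
      intro p hp hc
      rw [T.nomS.supp_eqv P' hsf] at hc
      obtain ⟨y, hy, hey⟩ := hc
      have hyp : y = p.2 := by
        have h' := congrArg s hey
        rw [hfix2 p hp] at h'
        rwa [Equiv.swap_apply_self] at h'
      exact h3 _ (List.mem_cons_of_mem _ hp) (hyp ▸ hy)
    obtain ⟨π', hπ'f, hf1, hf2, hfx, htr'⟩ :=
      ih (T.nomA.act s α) P (T.nomS.act s P') htr1 h1' h2' h3'
        (List.nodup_cons.mp h4).2 (List.nodup_cons.mp h5).2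
        (fun p hp q hq => h6 _ (List.mem_cons_of_mem _ hp) _ (List.mem_cons_of_mem _ hq))
    have hπ'a : π' a = a :=
      hfx a (fun p hp => ⟨Ne.symm (htl1a p hp), Ne.symm (htl2a p hp)⟩)
    have hπ'b : π' b = b :=
      hfx b (fun p hp => ⟨Ne.symm (htl1b p hp), Ne.symm (htl2b p hp)⟩)
    refine ⟨π' * s, isFinPerm_mul hπ'f hsf, ?_, ?_, ?_, ?_⟩
    · intro p hp
      rcases List.mem_cons.mp hp with h | h
      · rw [h]
        show π' (s a) = b
        rw [Equiv.swap_apply_left]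
        exact hπ'b
      · show π' (s p.1) = p.2
        rw [hfix1 p h]
        exact hf1 p h
    · intro p hp
      rcases List.mem_cons.mp hp with h | h
      · rw [h]
        show π' (s b) = a
        rw [Equiv.swap_apply_right]
        exact hπ'a
      · show π' (s p.2) = p.1
        rw [hfix2 p h]
        exact hf2 p h
    · intro x hx
      have hxa : x ≠ a := (hx _ hmemhd).1
      have hxb : x ≠ b := (hx _ hmemhd).2
      show π' (s x) = x
      rw [Equiv.swap_apply_of_ne_of_ne hxa hxb]
      exact hfx x (fun p hp => hx p (List.mem_cons_of_mem _ hp))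
    · rw [T.nomA.act_mul, T.nomS.act_mul]
      exact htr'

end Rename
section Closure

variable {S Pr Ac : Type} (T : NTS S Pr Ac)

/-- The closure of a relation under all finitary permutations. -/
def eqvClosure (R : S → S → Prop) : S → S → Prop := fun P Q =>
  ∃ π : Equiv.Perm Atom, IsFinPerm π ∧ R (T.nomS.act π P) (T.nomS.act π Q)

theorem subset_eqvClosure {R : S → S → Prop} {P Q : S} (h : R P Q) : eqvClosure T R P Q :=
  ⟨1, isFinPerm_one, by rwa [T.nomS.act_one, T.nomS.act_one]⟩

theorem eqvClosure_eqv {R : S → S → Prop} {P Q : S} (h : eqvClosure T R P Q)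
    {σ : Equiv.Perm Atom} (hσ : IsFinPerm σ) :
    eqvClosure T R (T.nomS.act σ P) (T.nomS.act σ Q) := by
  obtain ⟨π, hπ, hR⟩ := h
  refine ⟨π * σ⁻¹, isFinPerm_mul hπ (isFinPerm_inv hσ), ?_⟩
  rw [T.nomS.act_mul, T.nomS.act_mul, T.nomS.act_inv_act, T.nomS.act_inv_act]
  exact hR

theorem eqvClosure_weakBisim {τ : Ac} (hτ : suppAct T.nomA.act τ = ∅) {R : S → S → Prop}
    (hR : stIsWeakBisim T τ R) : stIsWeakBisim T τ (eqvClosure T R) := by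
  constructor
  · rintro P Q ⟨π, hπ, h⟩
    exact ⟨π, hπ, hR.1 _ _ h⟩
  · rintro P Q ⟨π, hπ, h⟩ a P' hfresh htr
    have htr' : stTr T (T.nomS.act π P) (T.actSum π a) (T.nomS.act π P') := stTr_eqv T hπ htr
    have hfresh' : ∀ x ∈ stBn T (T.actSum π a), x ∉ suppAct T.nomS.act (T.nomS.act π Q) := by
      intro x hx
      rw [← Finset.mem_coe, stBn_actSum T hπ] at hx
      obtain ⟨y, hy, rfl⟩ := hx
      rw [T.nomS.supp_eqv Q hπ]
      rintro ⟨z, hz, hez⟩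
      have hzy : z = y := π.injective hez
      exact hfresh y (by exact_mod_cast hy) (hzy ▸ hz)
    obtain ⟨Q₃, hw, hr⟩ := hR.2 _ _ h _ _ hfresh' htr'
    have hw' := stWeakTr_eqv T hτ (isFinPerm_inv hπ) hw
    rw [T.nomS.act_inv_act, ← T.actSum_mul, inv_mul_cancel, T.actSum_one] at hw'
    refine ⟨T.nomS.act π⁻¹ Q₃, hw', π, hπ, ?_⟩
    rwa [T.nomS.act_act_inv]

/-- Choose fresh partners for a list of atoms. -/
theorem fresh_pairing : ∀ (l : List Atom) (C : Set Atom), C.Finite →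
    ∃ L : List (Atom × Atom), L.map Prod.fst = l ∧ (L.map Prod.snd).Nodup ∧
      ∀ p ∈ L, p.2 ∉ C := by
  intro l
  induction l with
  | nil => exact fun C _ => ⟨[], rfl, List.nodup_nil, by simp⟩
  | cons x xs ih =>
    intro C hC
    obtain ⟨L', h1, h2, h3⟩ := ih C hC
    have hfin : (C ∪ {y | y ∈ L'.map Prod.snd}).Finite :=
      hC.union (List.finite_toSet _)
    obtain ⟨b, hb⟩ := hfin.infinite_compl.nonempty
    simp only [Set.mem_compl_iff, Set.mem_union, Set.mem_setOf_eq, not_or] at hb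
    refine ⟨(x, b) :: L', by simp [h1], ?_, ?_⟩
    · rw [List.map_cons, List.nodup_cons]
      exact ⟨hb.2, h2⟩
    · rintro p hp
      rcases List.mem_cons.mp hp with rfl | hp'
      · exact hb.1
      · exact h3 p hp'

end Closure
section Backward

variable {S Pr Ac : Type} (T : NTS S Pr Ac)

theorem backward_weak {τ : Ac} (hτ : suppAct T.nomA.act τ = ∅) {P₀ Q₀ : S}
    (h : stWBisim T τ P₀ Q₀) : T.WBisim τ P₀ Q₀ := by
  obtain ⟨R₀, hR₀, hPQ₀⟩ := h
  set R : S → S → Prop := eqvClosure T R₀ with hRdef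
  have hR : stIsWeakBisim T τ R := eqvClosure_weakBisim T hτ hR₀
  have hRsym : ∀ P Q, R P Q → R Q P := hR.1
  have hReqv : ∀ {P Q : S} {σ : Equiv.Perm Atom}, IsFinPerm σ → R P Q →
      R (T.nomS.act σ P) (T.nomS.act σ Q) := fun hσ h => eqvClosure_eqv T h hσ
  -- candidate relation
  set Rh : S → S → Prop := fun P Q => R P Q ∨
    ((∃ Q₂, TauStar T τ Q Q₂ ∧ R P Q₂) ∧ (∃ P₁, TauStar T τ P P₁ ∧ R P₁ Q)) with hRh
  -- the static-implication helper: matching a predicate self-loop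
  have helper : ∀ P Q₂ (φ : Pr), R P Q₂ → T.sat P φ →
      ∃ Q₃ Q₄, TauStar T τ Q₂ Q₃ ∧ T.sat Q₃ φ ∧ TauStar T τ Q₃ Q₄ ∧ R P Q₄ := by
    intro P Q₂ φ hr hsat
    have hfresh : ∀ x ∈ stBn T (Sum.inr φ : Ac ⊕ Pr), x ∉ suppAct T.nomS.act Q₂ := by
      intro x hx
      simp [stBn] at hx
    obtain ⟨Q', hw, hr'⟩ := hR.2 _ _ hr (Sum.inr φ) P hfresh ⟨rfl, hsat⟩
    rw [stWeakTr, if_neg (by simp)] at hw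
    obtain ⟨Q₃, Q₄', t1, ⟨heq, hsatQ₃⟩, t2⟩ := hw
    exact ⟨Q₃, Q', t1, hsatQ₃, heq ▸ t2, hr'⟩
  refine ⟨Rh, ⟨?_, ?_⟩, Or.inl (subset_eqvClosure T hPQ₀)⟩
  · -- symmetry
    rintro P Q (h | ⟨⟨Q₂, h1, h2⟩, ⟨P₁, h3, h4⟩⟩)
    · exact Or.inl (hRsym _ _ h)
    · exact Or.inr ⟨⟨P₁, h3, hRsym _ _ h4⟩, ⟨Q₂, h1, hRsym _ _ h2⟩⟩
  · intro P Q hPQ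
    constructor
    · -- weak static implication
      intro φ hsat
      rcases hPQ with h | ⟨⟨Q₂, hQQ₂, hRPQ₂⟩, _⟩
      · obtain ⟨Q₃, Q₄, t1, hsat3, t2, hr4⟩ := helper P Q φ h hsat
        obtain ⟨P₁, tp, hr1⟩ := interpolation T hτ hR t1 P (hRsym _ _ h)
        exact ⟨Q₃, t1, hsat3, Or.inr ⟨⟨Q₄, t2, hr4⟩, ⟨P₁, tp, hRsym _ _ hr1⟩⟩⟩
      · obtain ⟨Q₃, Q₄, t1, hsat3, t2, hr4⟩ := helper P Q₂ φ hRPQ₂ hsat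
        obtain ⟨P₁, tp, hr1⟩ := interpolation T hτ hR t1 P (hRsym _ _ hRPQ₂)
        exact ⟨Q₃, hQQ₂.trans t1, hsat3, Or.inr ⟨⟨Q₄, t2, hr4⟩, ⟨P₁, tp, hRsym _ _ hr1⟩⟩⟩
    · -- weak simulation
      intro α P' hfresh htr
      rcases hPQ with h | ⟨⟨Q₂, hQQ₂, hRPQ₂⟩, _⟩
      · obtain ⟨Q', hw, hr⟩ := hR.2 _ _ h (Sum.inl α) P' hfresh htr
        exact ⟨Q', (weakTr_iff_stWeakTr T τ Q α Q').mpr hw, Or.inl hr⟩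
      · -- alpha-convert the transition to be fresh for Q₂
        set C : Set Atom := suppAct T.nomS.act Q ∪ suppAct T.nomS.act Q₂ ∪
          suppAct T.nomA.act α ∪ suppAct T.nomS.act P' with hC
        have hCfin : C.Finite :=
          (((supp_finite (T.nomS.finSupp Q)).union (supp_finite (T.nomS.finSupp Q₂))).union
            (supp_finite (T.nomA.finSupp α))).union (supp_finite (T.nomS.finSupp P'))
        obtain ⟨L, hLfst, hLsnd, hLC⟩ := fresh_pairing (T.bn α).toList C hCfin
        have hmem1 : ∀ p ∈ L, p.1 ∈ T.bn α := by
          intro p hp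
          rw [← Finset.mem_toList, ← hLfst]
          exact List.mem_map_of_mem (f := Prod.fst) hp
        have hsuppbn : ∀ {x : Atom}, x ∈ T.bn α → x ∈ suppAct T.nomA.act α := by
          intro x hx
          exact T.bn_supp α (by exact_mod_cast hx)
        have hmem1C : ∀ p ∈ L, (p.1 : Atom) ∈ C := by
          intro p hp
          rw [hC]
          exact Or.inl (Or.inr (hsuppbn (hmem1 p hp)))
        obtain ⟨π, hπf, hf1, hf2, hfx, htrπ⟩ := rename_list T L α P P' htr hmem1
          (fun p hp hc => hLC p hp (Or.inl (Or.inr hc)))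
          (fun p hp hc => hLC p hp (Or.inr hc))
          (by rw [hLfst]; exact Finset.nodup_toList _)
          hLsnd
          (fun p hp q hq hc => hLC q hq (hc ▸ hmem1C p hp))
        -- π is an involution
        have hππ : ∀ x, π (π x) = x := by
          intro x
          by_cases h1 : ∃ p ∈ L, x = p.1
          · obtain ⟨p, hp, rfl⟩ := h1
            rw [hf1 p hp, hf2 p hp]
          · by_cases h2 : ∃ p ∈ L, x = p.2
            · obtain ⟨p, hp, rfl⟩ := h2
              rw [hf2 p hp, hf1 p hp]
            · push_neg at h1 h2
              have hx : π x = x := hfx x (fun p hp => ⟨h1 p hp, h2 p hp⟩)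
              rw [hx, hx]
        have hππ1 : π * π = 1 := Equiv.ext (fun x => by
          rw [Equiv.Perm.mul_apply, hππ]; rfl)
        -- π fixes Q
        have hQfix : T.nomS.act π Q = Q := by
          apply T.nomS.supp_supports Q π hπf
          intro z hz
          apply hfx z
          intro p hp
          constructor
          · intro hc
            exact hfresh p.1 (hmem1 p hp) (hc ▸ hz)
          · intro hc
            exact hLC p hp (hc ▸ (Or.inl (Or.inl (Or.inl hz))))
        -- the renamed action is fresh for Q₂
        have hfresh2 : ∀ x ∈ stBn T (Sum.inl (T.nomA.act π α) : Ac ⊕ Pr),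
            x ∉ suppAct T.nomS.act Q₂ := by
          intro x hx
          have hx' : x ∈ (T.bn (T.nomA.act π α) : Set Atom) := by exact_mod_cast hx
          rw [T.bn_eqv π hπf] at hx'
          obtain ⟨y, hy, rfl⟩ := hx'
          have : y ∈ (T.bn α).toList := Finset.mem_toList.mpr (by exact_mod_cast hy)
          rw [← hLfst] at this
          obtain ⟨p, hp, hpy⟩ := List.mem_map.mp this
          rw [← hpy, hf1 p hp]
          exact fun hc => hLC p hp (Or.inl (Or.inl (Or.inr hc)))
        -- simulate the renamed transition from Q₂
        obtain ⟨Q₃, hw, hr⟩ := hR.2 _ _ hRPQ₂ (Sum.inl (T.nomA.act π α)) (T.nomS.act π P')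
          hfresh2 htrπ
        have hw2 : stWeakTr T τ Q (Sum.inl (T.nomA.act π α)) Q₃ :=
          stWeakTr_prepend T hQQ₂ hw
        have hw3 := stWeakTr_eqv T hτ hπf hw2
        rw [hQfix] at hw3
        have hact : T.actSum π (Sum.inl (T.nomA.act π α)) = Sum.inl α := by
          show Sum.inl (T.nomA.act π (T.nomA.act π α)) = Sum.inl α
          rw [← T.nomA.act_mul, hππ1, T.nomA.act_one]
        rw [hact] at hw3
        have hrel : R P' (T.nomS.act π Q₃) := by
          have := hReqv hπf hr
          rwa [← T.nomS.act_mul, hππ1, T.nomS.act_one] at this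
        exact ⟨T.nomS.act π Q₃, (weakTr_iff_stWeakTr T τ Q α _).mpr hw3, Or.inl hrel⟩

end Backward
/-- State predicates can be replaced by self-loop actions: strong bisimilarity in `T`
coincides with strong bisimilarity in `S(T)`, and weak bisimilarity in `T` coincides with
weak bisimilarity in `S(T)`. -/
theorem predicates_as_selfloops {S Pr Ac : Type} (T : NTS S Pr Ac) (τ : Ac)
    (hτ : suppAct T.nomA.act τ = ∅) :
    (∀ P Q, T.Bisim P Q ↔ stBisim T P Q) ∧
    (∀ P Q, T.WBisim τ P Q ↔ stWBisim T τ P Q) := by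
  constructor
  · -- strong case
    intro P Q
    constructor
    · rintro ⟨R, ⟨hsym, hcl⟩, hPQ⟩
      refine ⟨R, ⟨hsym, ?_⟩, hPQ⟩
      intro P Q hPQ a P' hfresh htr
      cases a with
      | inl α => exact (hcl P Q hPQ).2 α P' hfresh htr
      | inr φ =>
        obtain ⟨heq, hsat⟩ := htr
        exact ⟨Q, ⟨rfl, (hcl P Q hPQ).1 φ hsat⟩, heq ▸ hPQ⟩
    · rintro ⟨R, ⟨hsym, hcl⟩, hPQ⟩
      refine ⟨R, ⟨hsym, ?_⟩, hPQ⟩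
      intro P Q hPQ
      constructor
      · intro φ hsat
        obtain ⟨Q', h1, _⟩ := hcl P Q hPQ (Sum.inr φ) P
          (fun x hx => by simp [stBn] at hx) ⟨rfl, hsat⟩
        obtain ⟨heq, h3⟩ := h1
        exact h3
      · intro α P' hfresh htr
        exact hcl P Q hPQ (Sum.inl α) P' hfresh htr
  · -- weak case
    intro P Q
    constructor
    · rintro ⟨R, ⟨hsym, hcl⟩, hPQ⟩
      refine ⟨R, ⟨hsym, ?_⟩, hPQ⟩
      intro P Q hPQ a P' hfresh htr
      cases a with
      | inl α =>
        obtain ⟨Q', h1, h2⟩ := (hcl P Q hPQ).2 α P' hfresh htr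
        exact ⟨Q', (weakTr_iff_stWeakTr T τ Q α Q').mp h1, h2⟩
      | inr φ =>
        obtain ⟨heq, hsat⟩ := htr
        obtain ⟨Q₁, htau, hsat1, hr⟩ := (hcl P Q hPQ).1 φ hsat
        refine ⟨Q₁, ?_, heq ▸ hr⟩
        rw [stWeakTr, if_neg (by simp)]
        exact ⟨Q₁, Q₁, htau, ⟨rfl, hsat1⟩, TauStar.refl Q₁⟩
    · exact fun h => backward_weak T hτ h
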